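/- arXiv:math/0609482 — 4 statements merged into one kernel-verified Lean document; each statement's English description precedes it below -/
import Mathlib

section
/- The Lagrangian of the 3D pendulum is invariant under the symmetry action Φ_θ: for every θ ∈ ℝ, every R ∈ SO(3), and every Ω ∈ ℝ³, L(exp(θ S(e₃)) R, Ω) = L(R, Ω), where L(R, Ω) = ½ tr(S(Ω) J_d S(Ω)ᵀ) + m g e₃ᵀ R ρ. -/
/-!
The kinetic term does not involve `R`, and the potential term only sees `e₃ᵀ R`.
Since `e₃ᵀ S(e₃) = 0`, every term of the exponential series of `θ S(e₃)` except the identity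
is killed by `e₃ᵀ`, so `e₃ᵀ exp (θ S(e₃)) = e₃ᵀ`: rotations about the gravity axis leave the
potential unchanged.
-/

open Matrix
open scoped Matrix

/-- The hat map `S : ℝ³ → 𝔰𝔬(3)`, defined by `S(x) y = x × y`. -/
def hat (x : Fin 3 → ℝ) : Matrix (Fin 3) (Fin 3) ℝ :=
  !![0, -x 2, x 1; x 2, 0, -x 0; -x 1, x 0, 0]

/-- The gravity direction `e₃ = (0,0,1)`. -/
def e3 : Fin 3 → ℝ := ![0, 0, 1]

/-- The nonstandard moment of inertia `J_d = ½ tr(J) I₃ − J`. -/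
noncomputable def Jd (J : Matrix (Fin 3) (Fin 3) ℝ) : Matrix (Fin 3) (Fin 3) ℝ :=
  ((1 : ℝ) / 2 * J.trace) • (1 : Matrix (Fin 3) (Fin 3) ℝ) - J

/-- The Lagrangian of the 3D pendulum,
`L(R, Ω) = ½ tr(S(Ω) J_d S(Ω)ᵀ) + m g e₃ᵀ R ρ`. -/
noncomputable def Lag (m g : ℝ) (ρ : Fin 3 → ℝ) (J : Matrix (Fin 3) (Fin 3) ℝ)
    (R : Matrix (Fin 3) (Fin 3) ℝ) (Ω : Fin 3 → ℝ) : ℝ :=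
  (1 : ℝ) / 2 * (hat Ω * Jd J * (hat Ω)ᵀ).trace + m * g * (e3 ⬝ᵥ (R *ᵥ ρ))

open scoped Nat

section

-- Only used to sum the exponential series; it induces the usual topology, so `exp` is unaffected.
attribute [local instance] Matrix.linftyOpNormedRing Matrix.linftyOpNormedAlgebra

theorem Matrix.vecMul_exp_of_vecMul_eq_zero {𝕂 m : Type*} [RCLike 𝕂] [Fintype m] [DecidableEq m]
    {v : m → 𝕂} {M : Matrix m m 𝕂} (h : v ᵥ* M = 0) : v ᵥ* NormedSpace.exp M = v := by
  have hpow : ∀ n ≠ 0, v ᵥ* M ^ n = 0 := by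
    rintro (_ | n) hn
    · contradiction
    · rw [pow_succ', ← vecMul_vecMul, h, zero_vecMul]
  have hseries := (NormedSpace.exp_series_hasSum_exp' (𝕂 := 𝕂) M).map
    (AddMonoidHom.mk' (v ᵥ* ·) (fun A B => vecMul_add A B v))
    (continuous_const.matrix_vecMul continuous_id)
  have hsingle : HasSum (fun n : ℕ => v ᵥ* ((n !⁻¹ : 𝕂) • M ^ n)) v := by
    convert hasSum_single (f := fun n : ℕ => v ᵥ* ((n !⁻¹ : 𝕂) • M ^ n)) 0
      fun n hn => by rw [vecMul_smul, hpow n hn, smul_zero]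
    simp
  exact hseries.unique hsingle

end

theorem vecMul_hat_self (x : Fin 3 → ℝ) : x ᵥ* hat x = 0 := by
  ext i
  fin_cases i <;> simp [hat, vecMul, dotProduct, Fin.sum_univ_three] <;> ring

theorem lagrangian_invariant_under_symmetry_general (m g : ℝ) (ρ : Fin 3 → ℝ)
    (J : Matrix (Fin 3) (Fin 3) ℝ) (θ : ℝ) (R : Matrix (Fin 3) (Fin 3) ℝ)
    (Ω : Fin 3 → ℝ) :
    Lag m g ρ J (NormedSpace.exp (θ • hat e3) * R) Ω = Lag m g ρ J R Ω := by
  have hfix : e3 ᵥ* NormedSpace.exp (θ • hat e3) = e3 :=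
    vecMul_exp_of_vecMul_eq_zero (by rw [vecMul_smul, vecMul_hat_self, smul_zero])
  rw [Lag, Lag, ← mulVec_mulVec, dotProduct_mulVec, hfix]

/-- The Lagrangian of the 3D pendulum is invariant under the symmetry action
`Φ_θ (R) = exp (θ S(e₃)) R`: `L(exp (θ S(e₃)) R, Ω) = L(R, Ω)`. -/
theorem lagrangian_invariant_under_symmetry (m g : ℝ) (ρ : Fin 3 → ℝ)
    (J : Matrix (Fin 3) (Fin 3) ℝ) (θ : ℝ) (R : Matrix (Fin 3) (Fin 3) ℝ)
    (hR : Rᵀ * R = 1) (hdet : R.det = 1) (Ω : Fin 3 → ℝ) :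
    Lag m g ρ J (NormedSpace.exp (θ • hat e3) * R) Ω = Lag m g ρ J R Ω :=
  lagrangian_invariant_under_symmetry_general m g ρ J θ R Ω
end

section
/- Variation of the discrete Legendre transform: for every F ∈ SO(3), every symmetric matrix J_d ∈ ℝ³ˣ³, and every ξ ∈ ℝ³, F S(ξ) J_d + J_d S(ξ) Fᵀ = S(( tr(F J_d) I₃ − F J_d ) F ξ). -/
open Matrix
open scoped Matrix

/-!
Rotations commute with the cross product: `Aᵀ S(Ax) A = det A · S(x)` for every `A`, hence
`F S(ξ) = S(Fξ) F` and `S(ξ) Fᵀ = Fᵀ S(Fξ)` for `F ∈ SO(3)`. With `A = F J_d` (so `Aᵀ = J_d Fᵀ`)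
and `x = Fξ` the left-hand side becomes `S(x) A + Aᵀ S(x)`, which equals `S((tr A · I₃ − A) x)`
for every `3 × 3` matrix `A`.
-/

lemma hat_transpose (x : Fin 3 → ℝ) : (hat x)ᵀ = -hat x := by
  ext i j
  fin_cases i <;> fin_cases j <;> simp [hat]

lemma hat_mul_add_transpose_mul_hat (A : Matrix (Fin 3) (Fin 3) ℝ) (x : Fin 3 → ℝ) :
    hat x * A + Aᵀ * hat x = hat ((A.trace • (1 : Matrix (Fin 3) (Fin 3) ℝ) - A) *ᵥ x) := by
  ext i j
  fin_cases i <;> fin_cases j <;>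
    simp [hat, mul_apply, mulVec, vecMul, dotProduct, Fin.sum_univ_succ, trace_fin_three,
      one_apply] <;>
    ring

lemma transpose_mul_hat_mulVec_mul (A : Matrix (Fin 3) (Fin 3) ℝ) (x : Fin 3 → ℝ) :
    Aᵀ * hat (A *ᵥ x) * A = A.det • hat x := by
  ext i j
  fin_cases i <;> fin_cases j <;>
    simp [hat, mul_apply, mulVec, dotProduct, Fin.sum_univ_succ, det_fin_three] <;>
    ring

section Rotation

variable {F : Matrix (Fin 3) (Fin 3) ℝ}

lemma mul_hat_eq_hat_mulVec_mul (hF : Fᵀ * F = 1) (hFdet : F.det = 1) (ξ : Fin 3 → ℝ) :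
    F * hat ξ = hat (F *ᵥ ξ) * F := by
  have hFFt : F * Fᵀ = 1 := mul_eq_one_comm.mp hF
  calc F * hat ξ = F * (Fᵀ * hat (F *ᵥ ξ) * F) := by
        rw [transpose_mul_hat_mulVec_mul, hFdet, one_smul]
    _ = (F * Fᵀ) * hat (F *ᵥ ξ) * F := by simp only [Matrix.mul_assoc]
    _ = hat (F *ᵥ ξ) * F := by rw [hFFt, Matrix.one_mul]

lemma hat_mul_transpose_eq_transpose_mul_hat_mulVec (hF : Fᵀ * F = 1) (hFdet : F.det = 1)
    (ξ : Fin 3 → ℝ) :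
    hat ξ * Fᵀ = Fᵀ * hat (F *ᵥ ξ) := by
  simpa [transpose_mul, hat_transpose] using
    congrArg transpose (mul_hat_eq_hat_mulVec_mul hF hFdet ξ)

end Rotation

/-- Variation of the discrete Legendre transform: for every `F ∈ SO(3)`, every symmetric
`J_d ∈ ℝ³ˣ³`, and every `ξ ∈ ℝ³`,
`F S(ξ) J_d + J_d S(ξ) Fᵀ = S((tr(F J_d) I₃ − F J_d) F ξ)`. -/
theorem variation_of_discrete_legendre_transform (F : Matrix (Fin 3) (Fin 3) ℝ)
    (hF : Fᵀ * F = 1) (hFdet : F.det = 1)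
    (Jd : Matrix (Fin 3) (Fin 3) ℝ) (hJd : Jdᵀ = Jd) (ξ : Fin 3 → ℝ) :
    F * hat ξ * Jd + Jd * hat ξ * Fᵀ =
      hat (((F * Jd).trace • (1 : Matrix (Fin 3) (Fin 3) ℝ) - F * Jd) *ᵥ (F *ᵥ ξ)) := by
  calc F * hat ξ * Jd + Jd * hat ξ * Fᵀ
      = hat (F *ᵥ ξ) * (F * Jd) + (F * Jd)ᵀ * hat (F *ᵥ ξ) := by
        rw [mul_hat_eq_hat_mulVec_mul hF hFdet, Matrix.mul_assoc Jd,
          hat_mul_transpose_eq_transpose_mul_hat_mulVec hF hFdet, transpose_mul, hJd,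
          Matrix.mul_assoc, Matrix.mul_assoc]
    _ = _ := hat_mul_add_transpose_mul_hat (F * Jd) (F *ᵥ ξ)
end

section
/- Conservation of the vertical angular momentum for the controlled continuous 3D pendulum: suppose R : ℝ → ℝ³ˣ³ and Π, Ω, u : ℝ → ℝ³ are differentiable, R(t) ∈ SO(3) for all t, and they satisfy Ṙ(t) = R(t) S(Ω(t)) and Π̇(t) = −Ω(t) × Π(t) + m g ρ × (R(t)ᵀ e₃) + (R(t)ᵀ e₃) × u(t) for all t. Then the function t ↦ e₃ᵀ (R(t) Π(t)) is constant. -/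
open Matrix
open scoped Matrix

attribute [local instance] Matrix.normedAddCommGroup Matrix.normedSpace

/-!
Writing `a = Rᵀ e₃`, the product rule and `Ṙ = R S(Ω)` give
`d/dt (e₃ᵀ R Π) = a ⬝ (Ω × Π + Π̇) = a ⬝ (m g ρ × a + a × u)`,
and both terms vanish because a cross product is orthogonal to each of its factors.
-/

section Derivatives

variable {𝕜 : Type*} [NontriviallyNormedField 𝕜] {m n : Type*} [Fintype n]

theorem HasDerivAt.dotProduct {u v : 𝕜 → n → 𝕜} {u' v' : n → 𝕜} {t : 𝕜}
    (hu : HasDerivAt u u' t) (hv : HasDerivAt v v' t) :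
    HasDerivAt (fun s => u s ⬝ᵥ v s) (u' ⬝ᵥ v t + u t ⬝ᵥ v') t := by
  have hcoord : ∀ j, HasDerivAt (fun s => u s j * v s j) (u' j * v t j + u t j * v' j) t :=
    fun j => (hasDerivAt_pi.1 hu j).mul (hasDerivAt_pi.1 hv j)
  exact (HasDerivAt.fun_sum (u := Finset.univ) fun j _ => hcoord j).congr_deriv
    (Finset.sum_add_distrib ..)

theorem HasDerivAt.matrix_mulVec {R : 𝕜 → Matrix m n 𝕜} {P : 𝕜 → n → 𝕜}
    {R' : Matrix m n 𝕜} {P' : n → 𝕜} {t : 𝕜}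
    (hR : HasDerivAt R R' t) (hP : HasDerivAt P P' t) :
    HasDerivAt (fun s => R s *ᵥ P s) (R' *ᵥ P t + R t *ᵥ P') t :=
  hasDerivAt_pi.2 fun i => (hasDerivAt_pi.1 hR i).dotProduct hP

end Derivatives

theorem hat_mulVec (x v : Fin 3 → ℝ) : hat x *ᵥ v = x ⨯₃ v := by
  ext i
  fin_cases i <;>
    simp [hat, crossProduct, Matrix.mulVec, dotProduct, Fin.sum_univ_three] <;> ring

theorem dotProduct_smul_cross_add_self_cross {α : Type*} [CommRing α] (k : α)
    (a b c : Fin 3 → α) : a ⬝ᵥ (k • (b ⨯₃ a) + a ⨯₃ c) = 0 := by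
  rw [dotProduct_add, dotProduct_smul, dot_cross_self, dot_self_cross, smul_zero, add_zero]

theorem vertical_angular_momentum_conserved_general (m g : ℝ) (ρ : Fin 3 → ℝ)
    (R : ℝ → Matrix (Fin 3) (Fin 3) ℝ) (P Ω u : ℝ → Fin 3 → ℝ)
    (hR : ∀ t, HasDerivAt R (R t * hat (Ω t)) t)
    (hP : ∀ t, HasDerivAt P
      (-(Ω t ⨯₃ P t) + (m * g) • (ρ ⨯₃ ((R t)ᵀ *ᵥ e3)) + ((R t)ᵀ *ᵥ e3) ⨯₃ u t) t) :
    ∀ t s : ℝ, e3 ⬝ᵥ (R t *ᵥ P t) = e3 ⬝ᵥ (R s *ᵥ P s) := by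
  have hderiv : ∀ t, HasDerivAt (fun t => e3 ⬝ᵥ (R t *ᵥ P t)) 0 t := by
    intro t
    refine ((hasDerivAt_const t e3).dotProduct ((hR t).matrix_mulVec (hP t))).congr_deriv ?_
    rw [zero_dotProduct, zero_add, ← mulVec_mulVec, hat_mulVec, ← mulVec_add,
      dotProduct_mulVec, ← mulVec_transpose, add_assoc, add_neg_cancel_left,
      dotProduct_smul_cross_add_self_cross]
  exact is_const_of_deriv_eq_zero (fun t => (hderiv t).differentiableAt) fun t => (hderiv t).deriv

/-- Conservation of the vertical angular momentum for the controlled continuous 3D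
pendulum: if `Ṙ = R S(Ω)` and `Π̇ = −Ω × Π + m g ρ × (Rᵀ e₃) + (Rᵀ e₃) × u`, with
`R(t) ∈ SO(3)` for all `t`, then `t ↦ e₃ᵀ (R(t) Π(t))` is constant. -/
theorem vertical_angular_momentum_conserved (m g : ℝ) (ρ : Fin 3 → ℝ)
    (R : ℝ → Matrix (Fin 3) (Fin 3) ℝ) (P Ω u : ℝ → Fin 3 → ℝ)
    (hSO : ∀ t, (R t)ᵀ * R t = 1 ∧ (R t).det = 1)
    (hΩ : Differentiable ℝ Ω) (hu : Differentiable ℝ u)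
    (hR : ∀ t, HasDerivAt R (R t * hat (Ω t)) t)
    (hP : ∀ t, HasDerivAt P
      (-(Ω t ⨯₃ P t) + (m * g) • (ρ ⨯₃ ((R t)ᵀ *ᵥ e3)) + ((R t)ᵀ *ᵥ e3) ⨯₃ u t) t) :
    ∀ t s : ℝ, e3 ⬝ᵥ (R t *ᵥ P t) = e3 ⬝ᵥ (R s *ᵥ P s) :=
  vertical_angular_momentum_conserved_general m g ρ R P Ω u hR hP
end

section
/- Discrete conservation of the vertical angular momentum by the Lie group variational integrator: let R_k ∈ SO(3), F_k ∈ SO(3), Π_k ∈ ℝ³, u_{k+1} ∈ ℝ³, h > 0, and define R_{k+1} = R_k F_k and Π_{k+1} = F_kᵀ Π_k + h m g ρ × (R_{k+1}ᵀ e₃) + h (R_{k+1}ᵀ e₃) × u_{k+1}. Then e₃ᵀ (R_{k+1} Π_{k+1}) = e₃ᵀ (R_k Π_k). -/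
open Matrix
open scoped Matrix

section
variable {α : Type*} [CommRing α]

theorem dotProduct_mulVec_eq_transpose_mulVec_dotProduct {m n : Type*} [Fintype m] [Fintype n]
    (A : Matrix m n α) (v : m → α) (w : n → α) :
    v ⬝ᵥ (A *ᵥ w) = (Aᵀ *ᵥ v) ⬝ᵥ w := by
  rw [dotProduct_mulVec, ← mulVec_transpose]

theorem dotProduct_mulVec_cross_transpose_mulVec (A : Matrix (Fin 3) (Fin 3) α)
    (v w : Fin 3 → α) : v ⬝ᵥ (A *ᵥ (w ⨯₃ (Aᵀ *ᵥ v))) = 0 := by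
  rw [dotProduct_mulVec_eq_transpose_mulVec_dotProduct, dot_cross_self]

theorem dotProduct_mulVec_transpose_mulVec_cross (A : Matrix (Fin 3) (Fin 3) α)
    (v w : Fin 3 → α) : v ⬝ᵥ (A *ᵥ ((Aᵀ *ᵥ v) ⨯₃ w)) = 0 := by
  rw [dotProduct_mulVec_eq_transpose_mulVec_dotProduct, dot_self_cross]

theorem mul_mulVec_transpose_mulVec {n : Type*} [Fintype n] [DecidableEq n]
    {R F : Matrix n n α} (hF : Fᵀ * F = 1) (p : n → α) :
    (R * F) *ᵥ (Fᵀ *ᵥ p) = R *ᵥ p := by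
  rw [mulVec_mulVec, mul_assoc, mul_eq_one_comm.mp hF, mul_one]

end

theorem discrete_vertical_angular_momentum_conserved_general (m g h : ℝ)
    (ρ : Fin 3 → ℝ) (Rk Fk : Matrix (Fin 3) (Fin 3) ℝ)
    (hFk : Fkᵀ * Fk = 1)
    (Pk u : Fin 3 → ℝ) :
    e3 ⬝ᵥ ((Rk * Fk) *ᵥ
      (Fkᵀ *ᵥ Pk + (h * m * g) • (ρ ⨯₃ ((Rk * Fk)ᵀ *ᵥ e3))
        + h • (((Rk * Fk)ᵀ *ᵥ e3) ⨯₃ u))) =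
    e3 ⬝ᵥ (Rk *ᵥ Pk) := by
  simp only [mulVec_add, mulVec_smul, dotProduct_add, dotProduct_smul,
    dotProduct_mulVec_cross_transpose_mulVec, dotProduct_mulVec_transpose_mulVec_cross,
    smul_zero, add_zero, mul_mulVec_transpose_mulVec hFk]

/-- Discrete conservation of the vertical angular momentum by the Lie group variational
integrator: with `R_{k+1} = R_k F_k` and
`Π_{k+1} = F_kᵀ Π_k + h m g ρ × (R_{k+1}ᵀ e₃) + h (R_{k+1}ᵀ e₃) × u_{k+1}`,
we have `e₃ᵀ (R_{k+1} Π_{k+1}) = e₃ᵀ (R_k Π_k)`. -/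
theorem discrete_vertical_angular_momentum_conserved (m g h : ℝ) (hh : 0 < h)
    (ρ : Fin 3 → ℝ) (Rk Fk : Matrix (Fin 3) (Fin 3) ℝ)
    (hRk : Rkᵀ * Rk = 1) (hRkdet : Rk.det = 1)
    (hFk : Fkᵀ * Fk = 1) (hFkdet : Fk.det = 1)
    (Pk u : Fin 3 → ℝ) :
    e3 ⬝ᵥ ((Rk * Fk) *ᵥ
      (Fkᵀ *ᵥ Pk + (h * m * g) • (ρ ⨯₃ ((Rk * Fk)ᵀ *ᵥ e3))
        + h • (((Rk * Fk)ᵀ *ᵥ e3) ⨯₃ u))) =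
    e3 ⬝ᵥ (Rk *ᵥ Pk) :=
  discrete_vertical_angular_momentum_conserved_general m g h ρ Rk Fk hFk Pk u
end
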